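/- Let F ⊂ ℝ² be a C² closed strictly convex curve, and on the set M̃ = {(k₁,k₂) ∈ F × F : min(d(k₁,k₂), d(a(k₁),k₂)) ≥ ω₁} the angle θ(k₁,k₂) between the normals at k₁ and k₂ satisfies |sin θ(k₁,k₂)| ≥ c · ω₁ for a constant c > 0 depending only on F. -/

import Mathlib

/-!
Since `θ' = κ ≥ κ₀`, the tangent angle moves by at least `κ₀ · |t - u|` between parameters
`u` and `t`. The normal at `γ t` is parallel to the normal at `γ s` exactly when `θ t - θ s ∈ πℤ`,
and the parameters where this happens are the lifts of `s` (even multiples of `π`) and of its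
antipode `α s` (odd multiples). On `M̃` the parameter `t` stays at arc-length distance `ω₁` from
all of them, so `θ t - θ s` stays at distance `κ₀ ω₁` from `πℤ`, and Jordan's inequality
`sin x ≥ 2x/π` on `[0, π/2]` turns this into `|sin (θ t - θ s)| ≥ (2/π) κ₀ ω₁`.
-/

open Real AddConstMap AddConstMapClass

theorem mul_abs_sub_le_abs_sub_of_le_deriv {f : ℝ → ℝ} (hf : Differentiable ℝ f) {C : ℝ}
    (hf' : ∀ x, C ≤ deriv f x) (x y : ℝ) : C * |y - x| ≤ |f y - f x| := by
  wlog hxy : x ≤ y generalizing x y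
  · rw [abs_sub_comm y, abs_sub_comm (f y)]
    exact this y x (le_of_not_ge hxy)
  have hmvt := mul_sub_le_image_sub_of_le_deriv hf hf' hxy
  rw [abs_of_nonneg (sub_nonneg.2 hxy)]
  exact hmvt.trans (le_abs_self _)

theorem abs_sin_sub_int_mul_pi (x : ℝ) (n : ℤ) : |sin (x - n * π)| = |sin x| := by
  rw [sin_sub_int_mul_pi, abs_mul, abs_neg_one_zpow, one_mul]

theorem two_div_pi_mul_abs_sub_round_mul_pi_le_abs_sin (x : ℝ) :
    2 / π * |x - round (x / π) * π| ≤ |sin x| := by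
  set r := x - round (x / π) * π
  have hr : |r| ≤ π / 2 := by
    have hround : |r| = |x / π - round (x / π)| * π := by
      rw [← abs_of_pos pi_pos, ← abs_mul, abs_of_pos pi_pos, sub_mul, div_mul_cancel₀ x pi_ne_zero]
    rw [hround]
    nlinarith [abs_sub_round (x / π), pi_pos]
  calc 2 / π * |r| ≤ sin |r| := mul_le_sin (abs_nonneg r) hr
    _ = |sin r| := (abs_sin_eq_sin_abs_of_abs_le_pi (hr.trans (by linarith [pi_pos]))).symm
    _ = |sin x| := abs_sin_sub_int_mul_pi x _

theorem two_div_pi_mul_le_abs_sin_of_forall_le_abs_sub_int_mul_pi {x δ : ℝ}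
    (h : ∀ m : ℤ, δ ≤ |x - m * π|) : 2 / π * δ ≤ |sin x| :=
  (mul_le_mul_of_nonneg_left (h _) (by positivity)).trans
    (two_div_pi_mul_abs_sub_round_mul_pi_le_abs_sin x)

theorem le_abs_sub_add_int_mul_of_le_sInf {ω s t L : ℝ}
    (h : ω ≤ sInf {x : ℝ | ∃ n : ℤ, x = |s - t + n * L|}) (n : ℤ) : ω ≤ |s - t + n * L| :=
  h.trans <| csInf_le ⟨0, fun _ ⟨_, hx⟩ => hx ▸ abs_nonneg _⟩ ⟨n, rfl⟩

section TangentAngle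

variable {θ κ : ℝ → ℝ} {L κ₀ : ℝ}

theorem mul_abs_sub_le_abs_sub_of_hasDerivAt (hθ : ∀ s, HasDerivAt θ (κ s) s)
    (hκ : ∀ s, κ₀ ≤ κ s) (u t : ℝ) : κ₀ * |t - u| ≤ |θ t - θ u| :=
  mul_abs_sub_le_abs_sub_of_le_deriv (fun x => (hθ x).differentiableAt)
    (fun x => (hθ x).deriv ▸ hκ x) u t

theorem mul_le_abs_sub_sub_two_pi_mul (hθ : ∀ s, HasDerivAt θ (κ s) s) (hκ₀ : 0 ≤ κ₀)
    (hκ : ∀ s, κ₀ ≤ κ s) (hθper : ∀ s, θ (s + L) = θ s + 2 * π) {ω u t : ℝ}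
    (hω : ∀ k : ℤ, ω ≤ |u - t + k * L|) (k : ℤ) : κ₀ * ω ≤ |θ t - θ u - k * (2 * π)| := by
  have hlift : θ (u + k • L) = θ u + k • (2 * π) :=
    map_add_zsmul (⟨θ, hθper⟩ : ℝ →+c[L, 2 * π] ℝ) u k
  have hgrowth := mul_abs_sub_le_abs_sub_of_hasDerivAt hθ hκ (u + k • L) t
  rw [hlift, zsmul_eq_mul, zsmul_eq_mul, abs_sub_comm t] at hgrowth
  calc κ₀ * ω ≤ κ₀ * |u + k * L - t| := by
        rw [add_sub_right_comm]; exact mul_le_mul_of_nonneg_left (hω k) hκ₀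
    _ ≤ |θ t - θ u - k * (2 * π)| := by rwa [sub_sub]

theorem mul_le_abs_sub_sub_int_mul_pi (hθ : ∀ s, HasDerivAt θ (κ s) s) (hκ₀ : 0 ≤ κ₀)
    (hκ : ∀ s, κ₀ ≤ κ s) (hθper : ∀ s, θ (s + L) = θ s + 2 * π) {ω s a t : ℝ}
    (ha : θ a = θ s + π) (hs : ∀ k : ℤ, ω ≤ |s - t + k * L|)
    (hat : ∀ k : ℤ, ω ≤ |a - t + k * L|) (m : ℤ) : κ₀ * ω ≤ |θ t - θ s - m * π| := by
  obtain ⟨k, rfl | rfl⟩ := Int.even_or_odd' m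
  · convert mul_le_abs_sub_sub_two_pi_mul hθ hκ₀ hκ hθper hs k using 3
    push_cast; ring
  · convert mul_le_abs_sub_sub_two_pi_mul hθ hκ₀ hκ hθper hat k using 2
    rw [ha]; push_cast; ring

end TangentAngle

theorem sin_angle_lower_bound_on_Mtilde_general
    (L : ℝ) (θ κ : ℝ → ℝ)
    (hθper : ∀ s, θ (s + L) = θ s + 2 * Real.pi)
    (hθderiv : ∀ s, HasDerivAt θ (κ s) s)
    (κ₀ κ₁ : ℝ) (hκ₀ : 0 < κ₀) (hκbd : ∀ s, κ₀ ≤ κ s ∧ κ s ≤ κ₁)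
    (dF : ℝ → ℝ → ℝ)
    (hdF : ∀ s t, dF s t = sInf {x : ℝ | ∃ n : ℤ, x = |s - t + n * L|})
    (α : ℝ → ℝ) (hα : ∀ s, θ (α s) = θ s + Real.pi) :
    ∃ c : ℝ, 0 < c ∧ ∀ ω₁ : ℝ, 0 < ω₁ → ∀ s t : ℝ,
      ω₁ ≤ min (dF s t) (dF (α s) t) →
      c * ω₁ ≤ |Real.sin (θ t - θ s)| := by
  refine ⟨2 / π * κ₀, by positivity, fun ω₁ _ s t hmin => ?_⟩
  rw [hdF, hdF, le_min_iff] at hmin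
  rw [mul_assoc]
  exact two_div_pi_mul_le_abs_sin_of_forall_le_abs_sub_int_mul_pi <|
    mul_le_abs_sub_sub_int_mul_pi hθderiv hκ₀.le (fun s => (hκbd s).1) hθper (hα s)
      (le_abs_sub_add_int_mul_of_le_sInf hmin.1) (le_abs_sub_add_int_mul_of_le_sInf hmin.2)

/-- Lower bound for the angle between normals on the set `M̃`.  `F = range γ`
is a strictly convex closed C² plane curve with curvature `κ` bounded between
`κ₀ > 0` and `κ₁` (arc-length parametrization `γ` of period `L`, tangent-angle
`θ`).  `dF` is the arc-length distance on the curve and `α` the antipodal map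
in the arc-length parameter (`θ (α s) = θ s + π`).  There is a constant
`c > 0`, depending only on `F`, such that whenever
`min(d(k₁, k₂), d(a k₁, k₂)) ≥ ω₁` (i.e. on `M̃`), the angle `θ(k₁, k₂)`
between the normals at `k₁ = γ s` and `k₂ = γ t` satisfies
`|sin θ(k₁, k₂)| ≥ c·ω₁`. -/
theorem sin_angle_lower_bound_on_Mtilde
    (L : ℝ) (hL : 0 < L) (γ : ℝ → ℝ × ℝ) (θ κ : ℝ → ℝ)
    (hγper : ∀ s, γ (s + L) = γ s)
    (hγinj : Set.InjOn γ (Set.Ico 0 L))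
    (hγderiv : ∀ s, HasDerivAt γ (Real.cos (θ s), Real.sin (θ s)) s)
    (hθmono : StrictMono θ)
    (hθper : ∀ s, θ (s + L) = θ s + 2 * Real.pi)
    (hθderiv : ∀ s, HasDerivAt θ (κ s) s) (hκcont : Continuous κ)
    (κ₀ κ₁ : ℝ) (hκ₀ : 0 < κ₀) (hκbd : ∀ s, κ₀ ≤ κ s ∧ κ s ≤ κ₁)
    (dF : ℝ → ℝ → ℝ)
    (hdF : ∀ s t, dF s t = sInf {x : ℝ | ∃ n : ℤ, x = |s - t + n * L|})
    (α : ℝ → ℝ) (hα : ∀ s, θ (α s) = θ s + Real.pi) :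
    ∃ c : ℝ, 0 < c ∧ ∀ ω₁ : ℝ, 0 < ω₁ → ∀ s t : ℝ,
      ω₁ ≤ min (dF s t) (dF (α s) t) →
      c * ω₁ ≤ |Real.sin (θ t - θ s)| :=
  sin_angle_lower_bound_on_Mtilde_general L θ κ hθper hθderiv κ₀ κ₁ hκ₀ hκbd dF hdF α hα
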